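/- Let n ≥ 1 and k ≥ 1 be integers, and let β > 0 be a real root of the polynomial g_n such that g_n has no root in the open interval (0,β). Then f(P_{2n}^k) ≥ ⌈√(kβ)⌉, where f(G) = min{Δ(G[S]) : S ⊆ V(G), |S| = α(G)+1}. -/

import Mathlib

open Finset

/-- The path graph on vertex set `{1,…,m}`, realized on `Fin m`
(vertex `i : Fin m` stands for label `i+1`); label `i` is adjacent to label `i+1`. -/
def pathGraph' (m : ℕ) : SimpleGraph (Fin m) where
  Adj i j := (i : ℕ) + 1 = (j : ℕ) ∨ (j : ℕ) + 1 = (i : ℕ)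
  symm := by constructor; intro i j h; tauto
  loopless := by constructor; intro i h; omega

/-- The Cartesian (box) product of `k` copies of the path `P_m`:
two vertices are adjacent iff they differ in exactly one coordinate, and
in that coordinate they are adjacent in the path. -/
def boxPower (m k : ℕ) : SimpleGraph (Fin k → Fin m) where
  Adj u v := ∃ i, (pathGraph' m).Adj (u i) (v i) ∧ ∀ j, j ≠ i → u j = v j
  symm := by
    constructor
    rintro u v ⟨i, hadj, h⟩
    exact ⟨i, hadj.symm, fun j hj => (h j hj).symm⟩
  loopless := by
    constructor
    rintro u ⟨i, hadj, -⟩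
    exact hadj.ne rfl

/-- A finite set of vertices is independent if its vertices are pairwise nonadjacent. -/
def IsIndepFinset {V : Type*} (G : SimpleGraph V) (S : Finset V) : Prop :=
  ∀ u ∈ S, ∀ v ∈ S, ¬ G.Adj u v

/-- The independence number `α(G)` of a finite graph. -/
noncomputable def indepNum {V : Type*} [Fintype V] (G : SimpleGraph V) : ℕ :=
  sSup {n | ∃ S : Finset V, IsIndepFinset G S ∧ S.card = n}

open scoped Classical in
/-- The maximum degree `Δ(G[S])` of the subgraph of `G` induced on `S`. -/
noncomputable def maxDegOn {V : Type*} (G : SimpleGraph V) (S : Finset V) : ℕ :=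
  S.sup fun v => (S.filter fun u => G.Adj v u).card

/-- `f(G)`: the minimum, over vertex subsets `S` of size `α(G)+1`, of the maximum
degree of the induced subgraph `G[S]`. -/
noncomputable def minMaxDeg {V : Type*} [Fintype V] (G : SimpleGraph V) : ℕ :=
  sInf {d | ∃ S : Finset V, S.card = indepNum G + 1 ∧ maxDegOn G S = d}

/-- The polynomial sequence `g_0(x) = 1`, `g_1(x) = x - 1`,
`g_k(x) = (x-2) g_{k-1}(x) - g_{k-2}(x)`. -/
noncomputable def gPoly : ℕ → ℝ → ℝ
  | 0, _ => 1
  | 1, x => x - 1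
  | (k + 2), x => (x - 2) * gPoly (k + 1) x - gPoly k x

/-!
Since `g_m(4 cos² θ) sin θ = sin((2m+1)θ)`, the number `4 cos²(nπ/(2n+1)) ∈ (0, 1]` is a root
of `g_n`, so the hypothesis on `β` gives `β ≤ 1`, and the bound follows from `f(P_{2n}^k) ≥ ⌈√k⌉`.

That bound is Huang's sensitivity argument. Pairing the vertices `2j, 2j+1` of `P_{2n}` gives, in
each direction `i`, a perfect matching of `P_{2n}^k`, i.e. an involution `πᵢ` of the vertices.
Signing the permutation matrix of `πᵢ` by `(-1)^(u₀ + ⋯ + u_{i-1})` makes these matrices `Aᵢ`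
pairwise anticommuting with `Aᵢ² = 1`, so `A = ∑ Aᵢ` satisfies `A² = k`. Conjugating by the
diagonal sign matrix of the bipartition turns `A` into `-A`, so the `√k`-eigenspace has dimension
`|V|/2 ≤ α`. Hence every set `S` of `α + 1` vertices supports a `√k`-eigenvector `v`, and since
`|A_{uw}| ≤ 1`, the eigenvalue equation at the vertex of `S` where `|v|` is largest forces at least
`√k` neighbours inside `S`.
-/

open Matrix

namespace Module.End

variable {K M : Type*} [Field K] [AddCommGroup M] [Module K M] {f : Module.End K M} {c : K}

theorem isCompl_eigenspace_neg [NeZero (2 : K)] (hf : f * f = (c * c) • 1) (hc : c ≠ 0) :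
    IsCompl (f.eigenspace c) (f.eigenspace (-c)) := by
  have hcc : c ≠ -c := fun h =>
    hc ((mul_eq_zero.1 (show (2 : K) * c = 0 by linear_combination h)).resolve_left two_ne_zero)
  refine ⟨f.disjoint_genEigenspace hcc 1 1, codisjoint_iff.2 (eq_top_iff.2 fun v _ => ?_)⟩
  have hff : f (f v) = (c * c) • v := by simpa using congr($hf v)
  have hv : v = (2 * c)⁻¹ • (c • v + f v) + (2 * c)⁻¹ • (c • v - f v) := by
    rw [← smul_add, add_add_sub_cancel, ← two_smul K, smul_smul, smul_smul,
      show (2 * c)⁻¹ * 2 * c = 1 by field_simp, one_smul]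
  rw [hv]
  refine Submodule.add_mem_sup (Submodule.smul_mem _ _ ?_) (Submodule.smul_mem _ _ ?_) <;>
  · rw [mem_eigenspace_iff]
    simp only [map_add, map_sub, map_smul, hff]
    module

theorem finrank_eigenspace_le_of_anticomm [FiniteDimensional K M] {g : Module.End K M}
    (hg : Function.Injective g) (hgf : g * f = -(f * g)) :
    Module.finrank K (f.eigenspace c) ≤ Module.finrank K (f.eigenspace (-c)) := by
  refine LinearMap.finrank_le_finrank_of_injective (f := g.restrict fun v hv => ?_)
    fun v w h => Subtype.ext (hg congr(($h : M)))
  rw [mem_eigenspace_iff] at hv ⊢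
  have := congr($hgf v)
  simp only [mul_apply, hv, map_smul, LinearMap.neg_apply] at this
  rw [← neg_eq_iff_eq_neg.2 this, neg_smul]

theorem two_mul_finrank_eigenspace [NeZero (2 : K)] [FiniteDimensional K M] {g : Module.End K M}
    (hf : f * f = (c * c) • 1) (hc : c ≠ 0) (hg : Function.Injective g)
    (hgf : g * f = -(f * g)) :
    2 * Module.finrank K (f.eigenspace c) = Module.finrank K M := by
  have hle := finrank_eigenspace_le_of_anticomm (c := c) hg hgf
  have hge := finrank_eigenspace_le_of_anticomm (c := -c) hg hgf
  rw [neg_neg] at hge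
  have := Submodule.finrank_add_eq_of_isCompl (isCompl_eigenspace_neg hf hc)
  omega

end Module.End

theorem exists_ne_zero_mem_vanishing_off {K V : Type*} [Field K] [Fintype V]
    (E : Submodule K (V → K)) (S : Finset V)
    (h : Fintype.card V < Module.finrank K E + S.card) :
    ∃ v ∈ E, v ≠ 0 ∧ ∀ w ∉ S, v w = 0 := by
  classical
  let restrict := LinearMap.funLeft K K (Subtype.val : {w // w ∉ S} → V) ∘ₗ E.subtype
  have hker : LinearMap.ker restrict ≠ ⊥ := LinearMap.ker_ne_bot_of_finrank_lt <| by
    rw [Module.finrank_fintype_fun_eq_card, Fintype.card_subtype_compl, Fintype.card_coe]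
    have := S.card_le_univ
    omega
  obtain ⟨v, hv, hv0⟩ := (Submodule.ne_bot_iff _).1 hker
  exact ⟨v, v.2, by simpa using hv0, fun w hw => congr_fun hv ⟨w, hw⟩⟩

section Graph

variable {V : Type*} [Fintype V] {G : SimpleGraph V}

theorem IsIndepFinset.card_le_indepNum {S : Finset V} (h : IsIndepFinset G S) :
    S.card ≤ indepNum G :=
  le_csSup ⟨Fintype.card V, by rintro _ ⟨T, -, rfl⟩; exact T.card_le_univ⟩ ⟨S, h, rfl⟩

theorem card_le_two_mul_indepNum (C : G.Coloring Bool) : Fintype.card V ≤ 2 * indepNum G := by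
  classical
  have hclass (b : Bool) : IsIndepFinset G (univ.filter (C · = b)) := fun u hu w hw hadj =>
    C.valid hadj ((mem_filter.1 hu).2.trans (mem_filter.1 hw).2.symm)
  have hsplit := card_filter_add_card_filter_not (s := univ) (C · = true)
  simp only [Bool.not_eq_true, card_univ] at hsplit
  have := (hclass true).card_le_indepNum
  have := (hclass false).card_le_indepNum
  omega

theorem indepNum_lt_card_of_adj {u w : V} (h : G.Adj u w) : indepNum G < Fintype.card V := by
  classical
  have hle : indepNum G ≤ Fintype.card V - 1 := by
    refine csSup_le ⟨0, ∅, fun _ h => absurd h (notMem_empty _), rfl⟩ ?_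
    rintro _ ⟨S, hS, rfl⟩
    have hne : S ≠ univ := fun hS' => hS u (hS' ▸ mem_univ u) w (hS' ▸ mem_univ w) h
    have := card_lt_card (ssubset_univ_iff.2 hne)
    rw [card_univ] at this
    omega
  have := Fintype.card_pos_iff.2 ⟨u⟩
  omega

theorem le_minMaxDeg {u w : V} (h : G.Adj u w) {d : ℕ}
    (hd : ∀ S : Finset V, indepNum G < S.card → d ≤ maxDegOn G S) : d ≤ minMaxDeg G := by
  obtain ⟨S, -, hS⟩ := exists_subset_card_eq (s := (univ : Finset V)) (n := indepNum G + 1)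
    (by rw [card_univ]; exact indepNum_lt_card_of_adj h)
  exact le_csInf ⟨_, S, hS, rfl⟩ fun _ ⟨T, hT, hTd⟩ => hTd ▸ hd T (by omega)

open scoped Classical in
theorem abs_le_maxDegOn_of_mulVec_eq_smul {A : Matrix V V ℝ}
    (hA : ∀ u w, A u w ≠ 0 → G.Adj u w) (hA1 : ∀ u w, |A u w| ≤ 1)
    {c : ℝ} {v : V → ℝ} {S : Finset V} (hv : A *ᵥ v = c • v) (hv0 : v ≠ 0)
    (hvS : ∀ w ∉ S, v w = 0) : |c| ≤ maxDegOn G S := by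
  obtain ⟨w₀, hw₀⟩ := Function.ne_iff.1 hv0
  have hw₀S : w₀ ∈ S := by_contra fun h => hw₀ (hvS w₀ h)
  obtain ⟨u, hu, hmax⟩ := S.exists_max_image (fun w => |v w|) ⟨w₀, hw₀S⟩
  have hvu : 0 < |v u| := (abs_pos.2 hw₀).trans_le (hmax w₀ hw₀S)
  set T := S.filter fun w => G.Adj u w
  have hterm (w : V) : |A u w * v w| ≤ if w ∈ T then |v u| else 0 := by
    rw [abs_mul]
    split_ifs with hwT
    · calc |A u w| * |v w| ≤ 1 * |v u| :=
            mul_le_mul (hA1 u w) (hmax w (mem_filter.1 hwT).1) (abs_nonneg _) zero_le_one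
        _ = |v u| := one_mul _
    by_cases hwS : w ∈ S
    · rw [not_imp_comm.1 (hA u w) fun h => hwT (mem_filter.2 ⟨hwS, h⟩), abs_zero, zero_mul]
    · rw [hvS w hwS, abs_zero, mul_zero]
  have key : |c| * |v u| ≤ T.card * |v u| := calc
    |c| * |v u| = |∑ w, A u w * v w| := by
      rw [← abs_mul, ← smul_eq_mul, ← Pi.smul_apply, ← hv]; rfl
    _ ≤ ∑ w, |A u w * v w| := abs_sum_le_sum_abs _ _
    _ ≤ ∑ w, if w ∈ T then |v u| else 0 := sum_le_sum fun w _ => hterm w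
    _ = T.card * |v u| := by rw [sum_ite_mem, univ_inter, sum_const, nsmul_eq_mul]
  exact (le_of_mul_le_mul_right key hvu).trans
    (Nat.cast_le.2 (le_sup (f := fun x => (S.filter fun w => G.Adj x w).card) hu))

end Graph

section FunMatrix

variable {V R : Type*} [DecidableEq V]

def funMatrix [Zero R] (σ : V → V) (e : V → R) : Matrix V V R :=
  Matrix.of fun u w => if w = σ u then e u else 0

theorem funMatrix_mul_funMatrix [Fintype V] [NonUnitalNonAssocSemiring R] (σ τ : V → V)
    (e f : V → R) :
    funMatrix σ e * funMatrix τ f = funMatrix (τ ∘ σ) fun u => e u * f (σ u) := by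
  ext u w
  rw [mul_apply, sum_eq_single (σ u) (fun j _ hj => by simp [funMatrix, hj]) (by simp)]
  simp [funMatrix]

theorem funMatrix_id [Zero R] (e : V → R) : funMatrix id e = diagonal e := by
  ext u w
  simp [funMatrix, diagonal, eq_comm]

theorem neg_funMatrix [NegZeroClass R] (σ : V → V) (e : V → R) :
    -funMatrix σ e = funMatrix σ (-e) := by
  ext u w
  by_cases h : w = σ u <;> simp [funMatrix, h]

end FunMatrix

theorem Finset.sum_mul_sum_self_of_anticomm {ι R : Type*} [Ring R] [DecidableEq ι]
    {a : ι → R} (hsq : ∀ i, a i * a i = 1)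
    (hanti : Pairwise fun i j => a i * a j = -(a j * a i))
    (s : Finset ι) : (∑ i ∈ s, a i) * (∑ i ∈ s, a i) = s.card := by
  induction s using Finset.induction_on with
  | empty => simp
  | insert i s hi ih =>
    have hcross : ∑ j ∈ s, (a i * a j + a j * a i) = 0 :=
      sum_eq_zero fun j hj => by rw [hanti (ne_of_mem_of_not_mem hj hi).symm, neg_add_cancel]
    rw [sum_insert hi, card_insert_of_notMem hi, add_mul, mul_add, mul_add, ih, hsq,
      mul_sum, sum_mul, ← add_assoc, add_assoc (1 : R), ← sum_add_distrib, hcross, add_zero,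
      Nat.cast_add_one, add_comm]

theorem neg_one_pow_of_pathGraph'_adj {m : ℕ} {a b : Fin m} (h : (pathGraph' m).Adj a b) :
    (-1 : ℝ) ^ (b : ℕ) = -(-1) ^ (a : ℕ) := by
  rcases h with h | h <;> rw [← h, pow_succ] <;> ring

section BoxPower

variable {m n k : ℕ}

def signOn (T : Finset (Fin k)) (u : Fin k → Fin m) : ℝ := ∏ t ∈ T, (-1) ^ (u t : ℕ)

theorem signOn_mul_self (T : Finset (Fin k)) (u : Fin k → Fin m) :
    signOn T u * signOn T u = 1 := by
  rw [signOn, ← prod_mul_distrib]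
  exact prod_eq_one fun t _ => by rw [← pow_add, ← two_mul, pow_mul, neg_one_sq, one_pow]

theorem abs_signOn (T : Finset (Fin k)) (u : Fin k → Fin m) : |signOn T u| = 1 := by
  rw [signOn, abs_prod]
  exact prod_eq_one fun t _ => abs_neg_one_pow _

theorem signOn_update_of_mem {T : Finset (Fin k)} {j : Fin k} (hj : j ∈ T) (u : Fin k → Fin m)
    {b : Fin m} (hb : (pathGraph' m).Adj (u j) b) :
    signOn T (Function.update u j b) = -signOn T u := by
  have hcomp : (fun t => (-1 : ℝ) ^ (Function.update u j b t : ℕ))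
      = Function.update (fun t => (-1 : ℝ) ^ (u t : ℕ)) j ((-1) ^ (b : ℕ)) :=
    Function.comp_update (fun a : Fin m => (-1 : ℝ) ^ (a : ℕ)) u j b
  rw [signOn, signOn, hcomp, prod_update_of_mem hj,
    prod_eq_mul_prod_sdiff_singleton j _ (absurd hj), neg_one_pow_of_pathGraph'_adj hb, neg_mul]

theorem signOn_update_of_notMem {T : Finset (Fin k)} {j : Fin k} (hj : j ∉ T)
    (u : Fin k → Fin m) (b : Fin m) : signOn T (Function.update u j b) = signOn T u :=
  prod_congr rfl fun t ht => by rw [Function.update_of_ne (ne_of_mem_of_not_mem ht hj)]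

theorem signOn_univ_of_adj {u w : Fin k → Fin m} (h : (boxPower m k).Adj u w) :
    signOn univ w = -signOn univ u := by
  obtain ⟨i, hadj, hoff⟩ := h
  have hw : w = Function.update u i (w i) :=
    Function.eq_update_iff.2 ⟨rfl, fun j hj => (hoff j hj).symm⟩
  rw [hw, signOn_update_of_mem (mem_univ i) u hadj]

noncomputable def boxPowerColoring : (boxPower m k).Coloring Bool :=
  SimpleGraph.Coloring.mk (fun u => signOn univ u = 1) fun {u w} h => by
    rw [signOn_univ_of_adj h]
    rcases mul_self_eq_one_iff.1 (signOn_mul_self univ u) with hu | hu <;> norm_num [hu]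

def partner (a : Fin (2 * n)) : Fin (2 * n) :=
  ⟨if (a : ℕ) % 2 = 0 then a + 1 else a - 1, by split <;> omega⟩

theorem pathGraph'_adj_partner (a : Fin (2 * n)) : (pathGraph' (2 * n)).Adj a (partner a) := by
  simp only [pathGraph', partner]
  split <;> omega

theorem partner_partner (a : Fin (2 * n)) : partner (partner a) = a := by
  ext
  simp only [partner]
  split <;> split <;> omega

def partnerAt (i : Fin k) (u : Fin k → Fin (2 * n)) : Fin k → Fin (2 * n) :=
  Function.update u i (partner (u i))

theorem boxPower_adj_partnerAt (i : Fin k) (u : Fin k → Fin (2 * n)) :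
    (boxPower (2 * n) k).Adj u (partnerAt i u) :=
  ⟨i, by simpa [partnerAt] using pathGraph'_adj_partner (u i),
    fun j hj => (Function.update_of_ne hj _ _).symm⟩

theorem partnerAt_partnerAt (i : Fin k) (u : Fin k → Fin (2 * n)) :
    partnerAt i (partnerAt i u) = u := by
  simp [partnerAt, partner_partner]

theorem partnerAt_comm (i j : Fin k) (u : Fin k → Fin (2 * n)) :
    partnerAt i (partnerAt j u) = partnerAt j (partnerAt i u) := by
  rcases eq_or_ne i j with rfl | hij
  · rfl
  simp only [partnerAt, Function.update_of_ne hij, Function.update_of_ne hij.symm]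
  exact Function.update_comm hij.symm _ _ _

theorem partnerAt_injective (u : Fin k → Fin (2 * n)) : Function.Injective (partnerAt · u) := by
  intro i j h
  by_contra hij
  have := congr_fun h i
  simp only [partnerAt, Function.update_self, Function.update_of_ne hij] at this
  exact (pathGraph'_adj_partner (u i)).ne this.symm

theorem signOn_partnerAt_of_mem {T : Finset (Fin k)} {i : Fin k} (hi : i ∈ T)
    (u : Fin k → Fin (2 * n)) : signOn T (partnerAt i u) = -signOn T u :=
  signOn_update_of_mem hi u (pathGraph'_adj_partner (u i))

theorem signOn_partnerAt_of_notMem {T : Finset (Fin k)} {i : Fin k} (hi : i ∉ T)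
    (u : Fin k → Fin (2 * n)) : signOn T (partnerAt i u) = signOn T u :=
  signOn_update_of_notMem hi u _

def huangSummand (i : Fin k) : Matrix (Fin k → Fin (2 * n)) (Fin k → Fin (2 * n)) ℝ :=
  funMatrix (partnerAt i) (signOn (Iio i))

def huangMatrix : Matrix (Fin k → Fin (2 * n)) (Fin k → Fin (2 * n)) ℝ :=
  ∑ i, huangSummand i

def paritySignMatrix : Matrix (Fin k → Fin (2 * n)) (Fin k → Fin (2 * n)) ℝ :=
  diagonal (signOn univ)

theorem huangSummand_mul_self (i : Fin k) :
    huangSummand (n := n) i * huangSummand i = 1 := by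
  rw [huangSummand, funMatrix_mul_funMatrix, ← diagonal_one, ← funMatrix_id]
  congr 1
  · exact funext (partnerAt_partnerAt i)
  · funext u
    rw [signOn_partnerAt_of_notMem (by simp) u, signOn_mul_self]

theorem huangSummand_anticomm {i j : Fin k} (hij : i ≠ j) :
    huangSummand (n := n) i * huangSummand j = -(huangSummand j * huangSummand i) := by
  rw [huangSummand, huangSummand, funMatrix_mul_funMatrix, funMatrix_mul_funMatrix, neg_funMatrix]
  congr 1
  · exact funext fun u => partnerAt_comm j i u
  · funext u
    simp only [Pi.neg_apply]
    rcases hij.lt_or_gt with h | h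
    · rw [signOn_partnerAt_of_mem (mem_Iio.2 h), signOn_partnerAt_of_notMem (by simpa using h.le)]
      ring
    · rw [signOn_partnerAt_of_notMem (by simpa using h.le), signOn_partnerAt_of_mem (mem_Iio.2 h)]
      ring

theorem huangMatrix_mul_self : huangMatrix (n := n) (k := k) * huangMatrix = (k : ℝ) • 1 := by
  rw [huangMatrix, sum_mul_sum_self_of_anticomm huangSummand_mul_self
    (fun _ _ => huangSummand_anticomm), card_univ, Fintype.card_fin,
    Nat.cast_smul_eq_nsmul, nsmul_one]

theorem paritySignMatrix_mul_self : paritySignMatrix (n := n) (k := k) * paritySignMatrix = 1 := by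
  rw [paritySignMatrix, diagonal_mul_diagonal, ← diagonal_one]
  exact congr_arg diagonal (funext fun u => signOn_mul_self univ u)

theorem paritySignMatrix_mul_huangMatrix :
    paritySignMatrix (n := n) (k := k) * huangMatrix = -(huangMatrix * paritySignMatrix) := by
  rw [huangMatrix, mul_sum, sum_mul, ← sum_neg_distrib]
  refine sum_congr rfl fun i _ => ?_
  rw [paritySignMatrix, huangSummand, ← funMatrix_id, funMatrix_mul_funMatrix,
    funMatrix_mul_funMatrix, neg_funMatrix]
  congr 1
  funext u
  rw [Pi.neg_apply, id, signOn_partnerAt_of_mem (mem_univ i)]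
  ring

theorem huangMatrix_apply (u w : Fin k → Fin (2 * n)) :
    huangMatrix u w = ∑ i, if w = partnerAt i u then signOn (Iio i) u else 0 := by
  simp [huangMatrix, huangSummand, funMatrix, Matrix.sum_apply]

theorem boxPower_adj_of_huangMatrix_ne_zero {u w : Fin k → Fin (2 * n)}
    (h : huangMatrix u w ≠ 0) : (boxPower (2 * n) k).Adj u w := by
  by_contra hnadj
  rw [huangMatrix_apply] at h
  exact h (sum_eq_zero fun i _ =>
    if_neg fun hi : w = partnerAt i u => hnadj (hi ▸ boxPower_adj_partnerAt i u))

theorem abs_huangMatrix_apply_le_one (u w : Fin k → Fin (2 * n)) : |huangMatrix u w| ≤ 1 := by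
  rw [huangMatrix_apply]
  by_cases h : ∃ i, w = partnerAt i u
  · obtain ⟨i, rfl⟩ := h
    rw [sum_eq_single_of_mem i (mem_univ i) fun j _ hji =>
      if_neg fun h => hji (partnerAt_injective u h).symm, if_pos rfl, abs_signOn]
  · rw [sum_eq_zero fun i _ => if_neg fun hi => h ⟨i, hi⟩, abs_zero]
    exact zero_le_one

theorem two_mul_finrank_eigenspace_huangMatrix (hk : k ≠ 0) :
    2 * Module.finrank ℝ
        (Module.End.eigenspace (toLinAlgEquiv' (huangMatrix (n := n) (k := k))) √k)
      = Fintype.card (Fin k → Fin (2 * n)) := by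
  set f := toLinAlgEquiv' (huangMatrix (n := n) (k := k))
  set g := toLinAlgEquiv' (paritySignMatrix (n := n) (k := k))
  have hc : √(k : ℝ) ≠ 0 := Real.sqrt_ne_zero'.2 (Nat.cast_pos.2 (Nat.pos_of_ne_zero hk))
  have hff : f * f = (√k * √k) • 1 := by
    rw [← map_mul, huangMatrix_mul_self, Real.mul_self_sqrt k.cast_nonneg, map_smul, map_one]
  have hg : Function.Injective g := Function.LeftInverse.injective (g := g) fun v => by
    rw [← Module.End.mul_apply, ← map_mul, paritySignMatrix_mul_self, map_one,
      Module.End.one_apply]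
  have hgf : g * f = -(f * g) := by
    rw [← map_mul, ← map_mul, paritySignMatrix_mul_huangMatrix, map_neg]
  rw [Module.End.two_mul_finrank_eigenspace hff hc hg hgf, Module.finrank_fintype_fun_eq_card]

theorem sqrt_le_maxDegOn_boxPower {S : Finset (Fin k → Fin (2 * n))}
    (hS : indepNum (boxPower (2 * n) k) < S.card) : √k ≤ maxDegOn (boxPower (2 * n) k) S := by
  rcases eq_or_ne k 0 with rfl | hk
  · simp
  have hdim := two_mul_finrank_eigenspace_huangMatrix (n := n) hk
  have hα := card_le_two_mul_indepNum (boxPowerColoring (m := 2 * n) (k := k))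
  obtain ⟨v, hv, hv0, hvS⟩ := exists_ne_zero_mem_vanishing_off
    (Module.End.eigenspace (toLinAlgEquiv' huangMatrix) √k) S (by omega)
  rw [Module.End.mem_eigenspace_iff, toLinAlgEquiv'_apply] at hv
  simpa [abs_of_nonneg] using abs_le_maxDegOn_of_mulVec_eq_smul
    (fun _ _ => boxPower_adj_of_huangMatrix_ne_zero) abs_huangMatrix_apply_le_one hv hv0 hvS

theorem ceil_sqrt_le_minMaxDeg_boxPower (hn : n ≠ 0) :
    ⌈√k⌉₊ ≤ minMaxDeg (boxPower (2 * n) k) := by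
  rcases Nat.eq_zero_or_pos k with rfl | hk
  · simp
  let u : Fin k → Fin (2 * n) := fun _ => ⟨0, by omega⟩
  exact le_minMaxDeg (boxPower_adj_partnerAt ⟨0, hk⟩ u) fun S hS =>
    Nat.ceil_le.2 (sqrt_le_maxDegOn_boxPower hS)

end BoxPower

open Real in
theorem gPoly_four_mul_cos_sq_mul_sin : ∀ (m : ℕ) (θ : ℝ),
    gPoly m (4 * cos θ ^ 2) * sin θ = sin ((2 * m + 1) * θ)
  | 0, θ => by simp [gPoly]
  | 1, θ => by
    rw [gPoly, show (2 * ((1 : ℕ) : ℝ) + 1) * θ = 3 * θ by norm_num, sin_three_mul, cos_sq']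
    ring
  | m + 2, θ => by
    have hsum : sin ((2 * m + 5) * θ) + sin ((2 * m + 1) * θ)
        = 2 * cos (2 * θ) * sin ((2 * m + 3) * θ) := by
      rw [show (2 * m + 5) * θ = (2 * m + 3) * θ + 2 * θ by ring,
        show (2 * m + 1) * θ = (2 * m + 3) * θ - 2 * θ by ring, sin_add, sin_sub]
      ring
    have ih₁ := gPoly_four_mul_cos_sq_mul_sin (m + 1) θ
    have ih₀ := gPoly_four_mul_cos_sq_mul_sin m θ
    rw [show (2 * ((m + 1 : ℕ) : ℝ) + 1) * θ = (2 * m + 3) * θ by push_cast; ring] at ih₁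
    rw [gPoly, show (2 * ((m + 2 : ℕ) : ℝ) + 1) * θ = (2 * m + 5) * θ by push_cast; ring]
    rw [cos_two_mul] at hsum
    linear_combination (4 * cos θ ^ 2 - 2) * ih₁ - ih₀ - hsum

open Real in
theorem exists_gPoly_eq_zero_mem_Ioc {n : ℕ} (hn : n ≠ 0) :
    ∃ x ∈ Set.Ioc (0 : ℝ) 1, gPoly n x = 0 := by
  set θ := n * π / (2 * n + 1)
  have hn1 : (1 : ℝ) ≤ n := Nat.one_le_cast.2 (Nat.pos_of_ne_zero hn)
  have hθ3 : π / 3 ≤ θ := by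
    rw [div_le_div_iff₀ (by norm_num) (by positivity)]
    nlinarith [pi_pos]
  have hθ2 : θ < π / 2 := by
    rw [div_lt_div_iff₀ (by positivity) (by norm_num)]
    nlinarith [pi_pos]
  have hθ0 : 0 < θ := (div_pos pi_pos (by norm_num)).trans_le hθ3
  have hcos0 : 0 < cos θ := cos_pos_of_mem_Ioo ⟨by linarith, hθ2⟩
  have hcos : cos θ ≤ 1 / 2 := by
    rw [← cos_pi_div_three]
    exact cos_le_cos_of_nonneg_of_le_pi (by positivity) (by linarith) hθ3
  refine ⟨4 * cos θ ^ 2, ⟨by positivity, by nlinarith⟩, ?_⟩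
  have hsin : sin θ ≠ 0 := (sin_pos_of_pos_of_lt_pi hθ0 (by linarith)).ne'
  have hroot : sin ((2 * n + 1) * θ) = 0 := by
    rw [show (2 * n + 1) * θ = n * π from mul_div_cancel₀ _ (by positivity)]
    exact sin_nat_mul_pi n
  exact (mul_eq_zero.1 ((gPoly_four_mul_cos_sq_mul_sin n θ).trans hroot)).resolve_right hsin

theorem minMaxDeg_boxPower_even_lower (n k : ℕ) (hn : 1 ≤ n)
    (β : ℝ)
    (hmin : ∀ x : ℝ, 0 < x → x < β → gPoly n x ≠ 0) :
    ⌈Real.sqrt (k * β)⌉₊ ≤ minMaxDeg (boxPower (2 * n) k) := by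
  obtain ⟨x, ⟨hx0, hx1⟩, hx⟩ := exists_gPoly_eq_zero_mem_Ioc (n := n) (by omega)
  have hβ : β ≤ 1 := by
    by_contra! h
    exact hmin x hx0 (hx1.trans_lt h) hx
  calc ⌈Real.sqrt (k * β)⌉₊ ≤ ⌈Real.sqrt k⌉₊ :=
        Nat.ceil_mono (Real.sqrt_le_sqrt (mul_le_of_le_one_right k.cast_nonneg hβ))
    _ ≤ minMaxDeg (boxPower (2 * n) k) := ceil_sqrt_le_minMaxDeg_boxPower (by omega)
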